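/- arXiv:math/9802121 — 5 statements merged into one kernel-verified Lean document; each statement's English description precedes it below -/
import Mathlib

section
/- For all x ∈ ℝ, log(Σ_{n∈ℤ} e^{−π n² e^{−2x}}) ≤ max(0, x) + log(Σ_{n∈ℤ} e^{−π n²}). -/
/-!
Write `θ t = ∑_{n ∈ ℤ} e^{-π n² t}`, so the claim is `log θ(e^{-2x}) ≤ max 0 x + log θ(1)`.
For `x ≤ 0` it follows from `θ` being decreasing on `(0, ∞)`. For `x > 0` the functional
equation `θ(1/t) = √t θ(t)` (Poisson summation) gives `θ(e^{-2x}) = e^x θ(e^{2x}) ≤ e^x θ(1)`.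
-/

open Real

noncomputable def thetaSum (t : ℝ) : ℝ := ∑' n : ℤ, exp (-π * n ^ 2 * t)

lemma summable_thetaSum {t : ℝ} (ht : 0 < t) :
    Summable fun n : ℤ ↦ exp (-π * n ^ 2 * t) := by
  refine (HurwitzKernelBounds.summable_f_int 0 0 ht).congr fun n ↦ ?_
  simp [HurwitzKernelBounds.f_int]

lemma one_le_thetaSum {t : ℝ} (ht : 0 < t) : 1 ≤ thetaSum t := by
  simpa [thetaSum] using (summable_thetaSum ht).le_tsum 0 fun _ _ ↦ (exp_pos _).le

lemma thetaSum_antitoneOn : AntitoneOn thetaSum (Set.Ioi 0) := fun _ hs _ ht hst ↦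
  Summable.tsum_le_tsum (fun _ ↦ exp_le_exp.mpr <| mul_le_mul_of_nonpos_left hst <|
    mul_nonpos_of_nonpos_of_nonneg (neg_nonpos.mpr pi_pos.le) (sq_nonneg _))
    (summable_thetaSum ht) (summable_thetaSum hs)

lemma thetaSum_inv {t : ℝ} (ht : 0 < t) : thetaSum t⁻¹ = √t * thetaSum t := by
  have := tsum_exp_neg_mul_int_sq (inv_pos.mpr ht)
  simp only [inv_rpow ht.le, div_inv_eq_mul, one_mul, ← sqrt_eq_rpow] at this
  simpa only [thetaSum, mul_right_comm _ _ (t⁻¹), mul_right_comm _ _ t] using this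

lemma thetaSum_le_thetaSum_one {t : ℝ} (ht : 1 ≤ t) : thetaSum t ≤ thetaSum 1 :=
  thetaSum_antitoneOn (Set.mem_Ioi.mpr one_pos) (Set.mem_Ioi.mpr (one_pos.trans_le ht)) ht

lemma thetaSum_inv_le {t : ℝ} (ht : 1 ≤ t) : thetaSum t⁻¹ ≤ √t * thetaSum 1 := by
  rw [thetaSum_inv (one_pos.trans_le ht)]
  exact mul_le_mul_of_nonneg_left (thetaSum_le_thetaSum_one ht) (sqrt_nonneg t)

/-- For all real `x`,
`log (∑_{n ∈ ℤ} e^{-π n² e^{-2x}}) ≤ max 0 x + log (∑_{n ∈ ℤ} e^{-π n²})`. -/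
theorem hzero_le_max_add (x : ℝ) :
    Real.log (∑' n : ℤ, Real.exp (-π * n ^ 2 * Real.exp (-2 * x))) ≤
      max 0 x + Real.log (∑' n : ℤ, Real.exp (-π * n ^ 2)) := by
  have hθ₁ : thetaSum 1 = ∑' n : ℤ, exp (-π * n ^ 2) := by simp only [thetaSum, mul_one]
  change log (thetaSum (exp (-2 * x))) ≤ max 0 x + log (∑' n : ℤ, exp (-π * n ^ 2))
  have hpos : 0 < thetaSum (exp (-2 * x)) := one_pos.trans_le (one_le_thetaSum (exp_pos _))
  rw [← hθ₁]
  rcases le_or_gt x 0 with hx | hx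
  · rw [max_eq_left hx, zero_add]
    exact log_le_log hpos (thetaSum_le_thetaSum_one (one_le_exp (by linarith)))
  · have hinv : exp (-2 * x) = (exp (2 * x))⁻¹ := by rw [← exp_neg, neg_mul]
    have hsqrt : √(exp (2 * x)) = exp x := by
      rw [show 2 * x = x + x by ring, exp_add, sqrt_mul_self (exp_pos x).le]
    calc log (thetaSum (exp (-2 * x)))
        ≤ log (exp x * thetaSum 1) := log_le_log hpos <| by
          simpa only [hinv, hsqrt] using thetaSum_inv_le (one_le_exp (x := 2 * x) (by linarith))
      _ = max 0 x + log (thetaSum 1) := by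
        rw [log_mul (exp_ne_zero x) (one_pos.trans_le (one_le_thetaSum one_pos)).ne', log_exp,
          max_eq_right hx.le]
end

section
/- The function x ↦ Σ_{n∈ℤ} exp(−π n² e^{−2x}) is strictly increasing on ℝ, tends to 1 as x → −∞, and tends to +∞ as x → +∞. -/
open Real Filter Topology Set

/-!
Substituting `t = e^{-2x}`, the function is `θ(t) = ∑ₙ exp(-π n² t)`, whose terms decrease in `t`,
strictly for `n ≠ 0`; so `θ` is strictly decreasing on `(0, ∞)`. As `t → ∞` every term but `n = 0`
dies, dominated by the terms at `t = 1`. As `t → 0⁺`, Poisson summation gives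
`θ(t) = t^{-1/2} θ(1/t) ≥ t^{-1/2}`.
-/

/-- `θ(t) = jacobiTheta (t * I)`. -/
noncomputable def theta (t : ℝ) : ℝ := ∑' n : ℤ, exp (-π * n ^ 2 * t)

lemma summable_theta_term {t : ℝ} (ht : 0 < t) :
    Summable fun n : ℤ => exp (-π * n ^ 2 * t) := by
  simpa [mul_comm, mul_left_comm] using summable_pow_mul_jacobiTheta₂_term_bound 0 ht 0

lemma theta_term_antitone (n : ℤ) : Antitone fun t : ℝ => exp (-π * n ^ 2 * t) :=
  fun _ _ hst => exp_le_exp.2 <| mul_le_mul_of_nonpos_left hst <| by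
    nlinarith [pi_pos, sq_nonneg (n : ℝ)]

lemma theta_strictAntiOn : StrictAntiOn theta (Ioi 0) := by
  intro s hs t ht hst
  refine Summable.tsum_lt_tsum (i := 1) (fun n => theta_term_antitone n hst.le) ?_
    (summable_theta_term ht) (summable_theta_term hs)
  exact exp_lt_exp.2 <| mul_lt_mul_of_neg_left hst <| by simp [pi_pos]

lemma tendsto_theta_atTop : Tendsto theta atTop (𝓝 1) := by
  have hlim (n : ℤ) :
      Tendsto (fun t => exp (-π * n ^ 2 * t)) atTop (𝓝 (if n = 0 then 1 else 0)) := by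
    rcases eq_or_ne n 0 with rfl | hn
    · simp
    · simp only [hn, if_false]
      exact tendsto_exp_atBot.comp <| tendsto_id.const_mul_atTop_of_neg <| by
        have : (0 : ℝ) < (n : ℝ) ^ 2 := by positivity
        nlinarith [pi_pos]
  have := tendsto_tsum_of_dominated_convergence (summable_theta_term one_pos) hlim <| by
    filter_upwards [eventually_ge_atTop 1] with t ht n
    rw [norm_of_nonneg (exp_pos _).le]
    exact theta_term_antitone n ht
  rwa [tsum_ite_eq] at this

lemma one_le_theta {t : ℝ} (ht : 0 < t) : 1 ≤ theta t := by
  unfold theta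
  simpa using (summable_theta_term ht).le_tsum 0 (fun n _ => (exp_pos _).le)

lemma theta_eq_rpow_mul_theta_inv {t : ℝ} (ht : 0 < t) :
    theta t = t ^ (-1 / 2 : ℝ) * theta t⁻¹ := by
  rw [neg_div, rpow_neg ht.le, ← one_div]
  unfold theta
  convert Real.tsum_exp_neg_mul_int_sq ht using 4 with n n <;> ring_nf

lemma tendsto_theta_nhdsGT_zero : Tendsto theta (𝓝[>] 0) atTop := by
  refine tendsto_atTop_mono' _ ?_ (tendsto_rpow_neg_nhdsGT_zero (by norm_num : (-1 / 2 : ℝ) < 0))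
  filter_upwards [self_mem_nhdsWithin] with t ht
  rw [theta_eq_rpow_mul_theta_inv ht]
  exact le_mul_of_one_le_right (rpow_pos_of_pos ht _).le (one_le_theta (inv_pos.2 ht))

/-- The function `x ↦ ∑_{n ∈ ℤ} exp(-π n² e^{-2x})` is strictly increasing,
tends to `1` as `x → -∞` and to `+∞` as `x → +∞`. -/
theorem kzero_strictMono_and_limits :
    StrictMono (fun x : ℝ => ∑' n : ℤ, Real.exp (-π * n ^ 2 * Real.exp (-2 * x))) ∧
      Tendsto (fun x : ℝ => ∑' n : ℤ, Real.exp (-π * n ^ 2 * Real.exp (-2 * x)))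
        atBot (nhds 1) ∧
      Tendsto (fun x : ℝ => ∑' n : ℤ, Real.exp (-π * n ^ 2 * Real.exp (-2 * x)))
        atTop atTop := by
  have hexp_atBot : Tendsto (fun x : ℝ => exp (-2 * x)) atBot atTop :=
    tendsto_exp_atTop.comp <| tendsto_id.const_mul_atBot_of_neg (by norm_num)
  have hexp_atTop : Tendsto (fun x : ℝ => exp (-2 * x)) atTop (𝓝[>] 0) :=
    tendsto_exp_atBot_nhdsGT.comp <| tendsto_id.const_mul_atTop_of_neg (by norm_num)
  refine ⟨fun x y hxy => theta_strictAntiOn (exp_pos _) (exp_pos _) ?_,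
    tendsto_theta_atTop.comp hexp_atBot, tendsto_theta_nhdsGT_zero.comp hexp_atTop⟩
  exact exp_lt_exp.2 (by linarith)
end

section
/- For x < 0, 0 < log(Σ_{n∈ℤ} e^{−π n² e^{−2x}}) ≤ Σ_{n∈ℤ, n≠0} e^{−π n² e^{−2x}} ≤ C · e^{−π e^{−2x}} where C = Σ_{n∈ℤ, n≠0} e^{−π(n²−1)} is a finite constant; in particular h⁰(D_x) → 0 doubly exponentially fast as x → −∞. -/
/-!
Write `t = e^{-2x} > 1`. The `n = 0` term of the theta sum is `1`, so the sum is `1 + T` with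
`T > 0` the sum over `n ≠ 0`, and `0 < log (1 + T) ≤ T`. For `n ≠ 0` we have
`(n² - 1)(t - 1) ≥ 0`, i.e. `n² t ≥ (n² - 1) + t`, which bounds each term of `T` by
`e^{-π (n² - 1)} e^{-π t}`.
-/

open Real

theorem Summable.tsum_eq_add_tsum_ne {α β : Type*} [AddCommGroup α] [UniformSpace α]
    [IsUniformAddGroup α] [CompleteSpace α] [T2Space α] {f : β → α} (hf : Summable f) (b : β) :
    ∑' n, f n = f b + ∑' n : {n // n ≠ b}, f n := by
  rw [← hf.tsum_subtype_add_tsum_subtype_compl {b}, tsum_singleton b f]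
  rfl

namespace Real

variable {c t : ℝ}

theorem summable_exp_neg_mul_int_sq (hc : 0 < c) : Summable fun n : ℤ => exp (-c * n ^ 2) := by
  have hnat : Summable fun n : ℕ => exp (-c * (n : ℝ) ^ 2) :=
    summable_exp_nat_mul_of_ge (neg_lt_zero.2 hc) fun n => by
      exact_mod_cast Nat.le_self_pow two_ne_zero n
  exact .of_nat_of_neg (by simpa using hnat) (by simpa using hnat)

theorem summable_exp_neg_mul_int_sq_sub_one (hc : 0 < c) :
    Summable fun n : ℤ => exp (-c * (n ^ 2 - 1)) := by
  refine ((summable_exp_neg_mul_int_sq hc).mul_left (exp c)).congr fun n => ?_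
  rw [← exp_add]
  ring_nf

theorem exp_neg_mul_int_sq_mul_le (hc : 0 < c) (ht : 1 ≤ t) {n : ℤ} (hn : n ≠ 0) :
    exp (-c * n ^ 2 * t) ≤ exp (-c * (n ^ 2 - 1)) * exp (-c * t) := by
  have hn2 : (1 : ℝ) ≤ (n : ℝ) ^ 2 := by
    exact_mod_cast Int.one_le_abs hn |> (one_le_sq_iff_one_le_abs _).2
  rw [← exp_add, exp_le_exp]
  nlinarith [mul_nonneg (mul_nonneg hc.le (sub_nonneg.2 hn2)) (sub_nonneg.2 ht)]

end Real

/-- For `x < 0`: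
`0 < log (∑_{n∈ℤ} e^{-π n² e^{-2x}}) ≤ ∑_{n≠0} e^{-π n² e^{-2x}} ≤ C e^{-π e^{-2x}}`
where `C = ∑_{n≠0} e^{-π (n²-1)}` is finite; so `h⁰(D_x) → 0` doubly exponentially. -/
theorem hzero_doubly_exponential_decay (x : ℝ) (hx : x < 0) :
    Summable (fun n : {n : ℤ // n ≠ 0} => Real.exp (-π * ((n : ℤ) ^ 2 - 1))) ∧
      0 < Real.log (∑' n : ℤ, Real.exp (-π * n ^ 2 * Real.exp (-2 * x))) ∧
      Real.log (∑' n : ℤ, Real.exp (-π * n ^ 2 * Real.exp (-2 * x))) ≤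
        (∑' n : {n : ℤ // n ≠ 0}, Real.exp (-π * (n : ℤ) ^ 2 * Real.exp (-2 * x))) ∧
      (∑' n : {n : ℤ // n ≠ 0}, Real.exp (-π * (n : ℤ) ^ 2 * Real.exp (-2 * x))) ≤
        (∑' n : {n : ℤ // n ≠ 0}, Real.exp (-π * ((n : ℤ) ^ 2 - 1))) *
          Real.exp (-π * Real.exp (-2 * x)) := by
  set t := exp (-2 * x)
  have ht : 1 < t := one_lt_exp_iff.2 (by linarith)
  have hθ : Summable fun n : ℤ => exp (-π * n ^ 2 * t) := by
    simpa only [mul_right_comm _ _ t, neg_mul] using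
      summable_exp_neg_mul_int_sq (mul_pos pi_pos (by linarith : 0 < t))
  have hC := (summable_exp_neg_mul_int_sq_sub_one pi_pos).subtype (· ≠ 0)
  set T := ∑' n : {n : ℤ // n ≠ 0}, exp (-π * (n : ℤ) ^ 2 * t)
  have hsplit : ∑' n : ℤ, exp (-π * n ^ 2 * t) = 1 + T := by
    rw [hθ.tsum_eq_add_tsum_ne 0, Int.cast_zero, zero_pow two_ne_zero, mul_zero, zero_mul,
      exp_zero]
  have hT : 0 < T :=
    (hθ.subtype _).tsum_pos (fun _ => (exp_pos _).le) ⟨1, one_ne_zero⟩ (exp_pos _)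
  refine ⟨hC, log_pos (by linarith), ?_, ?_⟩
  · rw [hsplit]
    linarith [log_le_sub_one_of_pos (by linarith : 0 < 1 + T)]
  · rw [← tsum_mul_right]
    exact (hθ.subtype _).tsum_le_tsum (fun n => exp_neg_mul_int_sq_mul_le pi_pos ht.le n.2)
      (hC.mul_right _)
end

section
/- Define Θ(x) = Σ_{n∈ℤ} exp(−π n² x²) for x > 0. For s, t ∈ ℂ with Re(s) < 0 and Re(t) < 0, the integral ζ_Q(s,t) = ∫₀^∞ Θ(x)^s Θ(1/x)^t dx/x converges absolutely. -/
/-!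
Since `Θ ≥ 1` and, by the functional equation `Θ(1/x) = x Θ(x)`, also `Θ(x) ≥ 1/x`, a negative
power `Θ(x)^σ` is at most `min 1 (x^{-σ})`. Hence the integrand is `O(x^{-Re s - 1})` near `0`
and `O(x^{Re t - 1})` near `∞`, and both powers are integrable there.
-/

open Real Complex MeasureTheory

/-- `Θ(x) = ∑_{n ∈ ℤ} exp (-π n² x²)` for `x > 0`. -/
noncomputable def ThetaQ (x : ℝ) : ℝ := ∑' n : ℤ, Real.exp (-Real.pi * n ^ 2 * x ^ 2)

open Set HurwitzZeta

lemma integrableOn_Ioi_of_norm_le_rpow {E : Type*} [NormedAddCommGroup E] {f : ℝ → E}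
    (hf : ContinuousOn f (Ioi 0)) {a b : ℝ} (ha : -1 < a) (hb : b < -1)
    (h₀ : ∀ x ∈ Ioc (0 : ℝ) 1, ‖f x‖ ≤ x ^ a) (h₁ : ∀ x ∈ Ioi (1 : ℝ), ‖f x‖ ≤ x ^ b) :
    IntegrableOn f (Ioi 0) := by
  rw [← Ioc_union_Ioi_eq_Ioi zero_le_one]
  refine IntegrableOn.union ?_ ?_
  · exact ((intervalIntegrable_iff_integrableOn_Ioc_of_le zero_le_one).1
      (intervalIntegral.intervalIntegrable_rpow' ha)).mono'
      ((hf.mono Ioc_subset_Ioi_self).aestronglyMeasurable measurableSet_Ioc)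
      ((ae_restrict_iff' measurableSet_Ioc).2 (.of_forall h₀))
  · exact (integrableOn_Ioi_rpow_of_lt hb one_pos).mono'
      ((hf.mono (Ioi_subset_Ioi zero_le_one)).aestronglyMeasurable measurableSet_Ioi)
      ((ae_restrict_iff' measurableSet_Ioi).2 (.of_forall h₁))

lemma norm_cexp_mul_log (s : ℂ) {a : ℝ} (ha : 0 < a) : ‖cexp (s * Real.log a)‖ = a ^ s.re := by
  rw [Complex.norm_exp, re_mul_ofReal, Real.rpow_def_of_pos ha, mul_comm]

lemma ThetaQ_nonneg (x : ℝ) : 0 ≤ ThetaQ x :=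
  tsum_nonneg fun _ => (Real.exp_pos _).le

lemma hasSum_ThetaQ {x : ℝ} (hx : x ≠ 0) :
    HasSum (fun n : ℤ => Real.exp (-π * n ^ 2 * x ^ 2)) (evenKernel 0 (x ^ 2)) := by
  simpa [mul_assoc] using hasSum_int_evenKernel 0 (by positivity : 0 < x ^ 2)

lemma ThetaQ_eq_evenKernel {x : ℝ} (hx : x ≠ 0) : ThetaQ x = evenKernel 0 (x ^ 2) :=
  (hasSum_ThetaQ hx).tsum_eq

lemma one_le_ThetaQ {x : ℝ} (hx : x ≠ 0) : 1 ≤ ThetaQ x := by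
  simpa [ThetaQ_eq_evenKernel hx] using
    le_hasSum (hasSum_ThetaQ hx) 0 fun n _ => (Real.exp_pos _).le

lemma ThetaQ_pos {x : ℝ} (hx : x ≠ 0) : 0 < ThetaQ x :=
  one_pos.trans_le (one_le_ThetaQ hx)

lemma ThetaQ_one_div {x : ℝ} (hx : 0 < x) : ThetaQ (1 / x) = x * ThetaQ x := by
  rw [ThetaQ_eq_evenKernel hx.ne', ThetaQ_eq_evenKernel (one_div_pos.2 hx).ne',
    evenKernel_functional_equation 0 (x ^ 2), ← evenKernel_eq_cosKernel_of_zero,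
    ← Real.sqrt_eq_rpow, Real.sqrt_sq hx.le, one_div_pow]
  field_simp

lemma one_div_le_ThetaQ {x : ℝ} (hx : 0 < x) : 1 / x ≤ ThetaQ x := by
  rw [div_le_iff₀ hx, mul_comm, ← ThetaQ_one_div hx]
  exact one_le_ThetaQ (one_div_pos.2 hx).ne'

lemma le_ThetaQ_one_div {x : ℝ} (hx : 0 < x) : x ≤ ThetaQ (1 / x) := by
  rw [ThetaQ_one_div hx]
  exact le_mul_of_one_le_right hx.le (one_le_ThetaQ hx.ne')

lemma continuousOn_ThetaQ : ContinuousOn ThetaQ (Ioi 0) :=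
  ((continuousOn_evenKernel 0).comp (continuous_pow 2).continuousOn
    fun _ hx => pow_pos hx 2).congr fun _ hx => ThetaQ_eq_evenKernel (ne_of_gt hx)

lemma ThetaQ_rpow_mul_rpow_le_rpow_neg {σ τ x : ℝ} (hσ : σ ≤ 0) (hτ : τ ≤ 0) (hx : 0 < x) :
    ThetaQ x ^ σ * ThetaQ (1 / x) ^ τ ≤ x ^ (-σ) := by
  have hΘx : ThetaQ x ^ σ ≤ x ^ (-σ) := by
    rw [rpow_neg_eq_inv_rpow, ← one_div]
    exact Real.rpow_le_rpow_of_nonpos (one_div_pos.2 hx) (one_div_le_ThetaQ hx) hσ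
  have hΘx' : ThetaQ (1 / x) ^ τ ≤ 1 :=
    Real.rpow_le_one_of_one_le_of_nonpos (one_le_ThetaQ (one_div_pos.2 hx).ne') hτ
  simpa using mul_le_mul hΘx hΘx' (rpow_nonneg (ThetaQ_nonneg _) _) (rpow_nonneg hx.le _)

lemma ThetaQ_rpow_mul_rpow_le_rpow {σ τ x : ℝ} (hσ : σ ≤ 0) (hτ : τ ≤ 0) (hx : 0 < x) :
    ThetaQ x ^ σ * ThetaQ (1 / x) ^ τ ≤ x ^ τ := by
  have hΘx : ThetaQ x ^ σ ≤ 1 := Real.rpow_le_one_of_one_le_of_nonpos (one_le_ThetaQ hx.ne') hσ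
  have hΘx' : ThetaQ (1 / x) ^ τ ≤ x ^ τ :=
    Real.rpow_le_rpow_of_nonpos hx (le_ThetaQ_one_div hx) hτ
  simpa using mul_le_mul hΘx hΘx' (rpow_nonneg (ThetaQ_nonneg _) _) zero_le_one

/-- The two-variable zeta integral `∫₀^∞ Θ(x)ˢ Θ(1/x)ᵗ dx/x` of `ℚ` converges absolutely
for `Re s < 0` and `Re t < 0` (complex powers taken via the real logarithm of `Θ > 0`). -/
theorem two_variable_zeta_integrable (s t : ℂ) (hs : s.re < 0) (ht : t.re < 0) :
    IntegrableOn
      (fun x : ℝ =>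
        Complex.exp (s * Real.log (ThetaQ x)) * Complex.exp (t * Real.log (ThetaQ (1 / x))) / x)
      (Set.Ioi 0) := by
  have hlog : ContinuousOn (fun x => Real.log (ThetaQ x)) (Ioi 0) :=
    continuousOn_ThetaQ.log fun x hx => (ThetaQ_pos (ne_of_gt hx)).ne'
  have hlog' : ContinuousOn (fun x => Real.log (ThetaQ (1 / x))) (Ioi 0) :=
    hlog.comp (continuousOn_const.div continuousOn_id fun x hx => ne_of_gt hx)
      fun x hx => mem_Ioi.2 (one_div_pos.2 hx)
  have hnorm : ∀ x : ℝ, 0 < x → ‖cexp (s * Real.log (ThetaQ x)) *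
      cexp (t * Real.log (ThetaQ (1 / x))) / x‖ = ThetaQ x ^ s.re * ThetaQ (1 / x) ^ t.re / x :=
    fun x hx => by
      rw [norm_div, norm_mul, norm_cexp_mul_log s (ThetaQ_pos hx.ne'),
        norm_cexp_mul_log t (ThetaQ_pos (one_div_pos.2 hx).ne'), norm_real, norm_of_nonneg hx.le]
  refine integrableOn_Ioi_of_norm_le_rpow (a := -s.re - 1) (b := t.re - 1) ?_ (by linarith)
    (by linarith) (fun x hx => ?_) (fun x hx => ?_)
  · exact ((continuousOn_const.mul (continuous_ofReal.comp_continuousOn hlog)).cexp.mul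
      (continuousOn_const.mul (continuous_ofReal.comp_continuousOn hlog')).cexp).div
      continuous_ofReal.continuousOn fun x hx => ofReal_ne_zero.2 (ne_of_gt hx)
  · rw [hnorm x hx.1, Real.rpow_sub_one hx.1.ne']
    exact div_le_div_of_nonneg_right
      (ThetaQ_rpow_mul_rpow_le_rpow_neg hs.le ht.le hx.1) hx.1.le
  · have hx₀ : 0 < x := one_pos.trans hx
    rw [hnorm x hx₀, Real.rpow_sub_one hx₀.ne']
    exact div_le_div_of_nonneg_right (ThetaQ_rpow_mul_rpow_le_rpow hs.le ht.le hx₀) hx₀.le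
end

section
/- For every x ∈ ℝ, Σ_{n∈ℤ} exp(−π n² e^{−2x}) ≤ (1 + e^{x}) · Σ_{n∈ℤ} exp(−π n²); consequently h⁰(D_x) ≤ log(1 + e^x) + h⁰(O_Q) for all Arakelov divisors D_x of Q. -/
/-!
The theta sum `θ(c) = ∑_{n∈ℤ} e^{-π n² c}` is decreasing in `c`, so `θ(c) ≤ θ(1)` for `c ≥ 1`.
For `0 < c ≤ 1` Poisson summation gives `θ(c) = c^{-1/2} θ(1/c) ≤ c^{-1/2} θ(1)`.
With `c = e^{-2x}` either bound is at most `(1 + eˣ) θ(1)`, and taking logarithms gives the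
bound on `h⁰`.
-/

open Real

lemma summable_exp_neg_pi_mul_int_sq {c : ℝ} (hc : 0 < c) :
    Summable fun n : ℤ => exp (-π * n ^ 2 * c) := by
  simpa [mul_comm c, mul_assoc] using summable_pow_mul_jacobiTheta₂_term_bound 0 hc 0

lemma tsum_exp_neg_pi_mul_int_sq_pos {c : ℝ} (hc : 0 < c) :
    0 < ∑' n : ℤ, exp (-π * n ^ 2 * c) :=
  (summable_exp_neg_pi_mul_int_sq hc).tsum_pos (fun _ => (exp_pos _).le) 0 (exp_pos _)

lemma tsum_exp_neg_pi_int_sq_pos : 0 < ∑' n : ℤ, exp (-π * n ^ 2) := by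
  simpa using tsum_exp_neg_pi_mul_int_sq_pos one_pos

lemma tsum_exp_neg_pi_mul_int_sq_le_of_one_le {c : ℝ} (hc : 1 ≤ c) :
    ∑' n : ℤ, exp (-π * n ^ 2 * c) ≤ ∑' n : ℤ, exp (-π * n ^ 2) := by
  simpa using (summable_exp_neg_pi_mul_int_sq (one_pos.trans_le hc)).tsum_le_tsum
    (fun n : ℤ => exp_le_exp.mpr <| by nlinarith [show 0 ≤ π * n ^ 2 by positivity])
    (summable_exp_neg_pi_mul_int_sq one_pos)

lemma tsum_exp_neg_pi_mul_int_sq_eq_inv_sqrt_mul {c : ℝ} (hc : 0 < c) :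
    ∑' n : ℤ, exp (-π * n ^ 2 * c) = (√c)⁻¹ * ∑' n : ℤ, exp (-π * n ^ 2 * c⁻¹) := by
  have h := Real.tsum_exp_neg_mul_int_sq hc
  rw [← sqrt_eq_rpow, one_div] at h
  convert h using 4 with n n
  · ring
  · congr 1; ring

lemma tsum_exp_neg_pi_mul_int_sq_le_of_le_one {c : ℝ} (hc : 0 < c) (hc₁ : c ≤ 1) :
    ∑' n : ℤ, exp (-π * n ^ 2 * c) ≤ (√c)⁻¹ * ∑' n : ℤ, exp (-π * n ^ 2) := by
  rw [tsum_exp_neg_pi_mul_int_sq_eq_inv_sqrt_mul hc]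
  exact mul_le_mul_of_nonneg_left
    (tsum_exp_neg_pi_mul_int_sq_le_of_one_le (one_le_inv₀ hc |>.mpr hc₁)) (by positivity)

lemma tsum_exp_neg_pi_mul_int_sq_exp_le (x : ℝ) :
    ∑' n : ℤ, exp (-π * n ^ 2 * exp (-2 * x)) ≤ (1 + exp x) * ∑' n : ℤ, exp (-π * n ^ 2) := by
  have hθ₁ := tsum_exp_neg_pi_int_sq_pos.le
  rcases le_total x 0 with hx | hx
  · calc _ ≤ ∑' n : ℤ, exp (-π * n ^ 2) :=
          tsum_exp_neg_pi_mul_int_sq_le_of_one_le (one_le_exp (by linarith))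
      _ ≤ _ := le_mul_of_one_le_left hθ₁ (by linarith [exp_pos x])
  · have hsqrt : (√(exp (-2 * x)))⁻¹ = exp x := by
      rw [show -2 * x = ((2 : ℕ) : ℝ) * -x by push_cast; ring, exp_nat_mul,
        sqrt_sq (exp_pos _).le, exp_neg, inv_inv]
    calc _ ≤ (√(exp (-2 * x)))⁻¹ * ∑' n : ℤ, exp (-π * n ^ 2) :=
          tsum_exp_neg_pi_mul_int_sq_le_of_le_one (exp_pos _) (exp_le_one_iff.mpr (by linarith))
      _ ≤ _ := by rw [hsqrt]; gcongr; linarith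

/-- For every real `x`,
`∑_{n∈ℤ} e^{-π n² e^{-2x}} ≤ (1 + eˣ) ∑_{n∈ℤ} e^{-π n²}`; consequently
`h⁰(D_x) ≤ log (1 + eˣ) + h⁰(O_ℚ)`. -/
theorem kzero_le_and_hzero_le (x : ℝ) :
    (∑' n : ℤ, Real.exp (-π * n ^ 2 * Real.exp (-2 * x))) ≤
        (1 + Real.exp x) * ∑' n : ℤ, Real.exp (-π * n ^ 2) ∧
      Real.log (∑' n : ℤ, Real.exp (-π * n ^ 2 * Real.exp (-2 * x))) ≤
        Real.log (1 + Real.exp x) + Real.log (∑' n : ℤ, Real.exp (-π * n ^ 2)) := by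
  have key := tsum_exp_neg_pi_mul_int_sq_exp_le x
  refine ⟨key, ?_⟩
  rw [← log_mul (by positivity) tsum_exp_neg_pi_int_sq_pos.ne']
  exact log_le_log (tsum_exp_neg_pi_mul_int_sq_pos (exp_pos _)) key
end
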